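/- Let G be a consensus game with seed (R, L_acc, L_rej) and τ := R R⁻¹. Then G is solvable if and only if τ* L_acc ∩ τ* L_rej = ∅. -/

import Mathlib

/-! ## Consensus game acceptors (Berwanger–van den Bogaard).
A consensus game acceptor over an observation alphabet `Γ` is a finite graph
with an initial state, two observation labellings, and a nonempty set of
admissible decisions at each final (sink) state. -/
structure CGame (Γ : Type) where
  V : Type
  fintypeV : Fintype V
  E : V → V → Prop
  init : V
  β1 : V → Γ
  β2 : V → Γ
  Ω : V → Set Bool
  Ω_ne : ∀ v, (∀ u, ¬ E v u) → (Ω v).Nonempty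

namespace CGame

variable {Γ : Type} (G : CGame Γ)

/-- A final state has no outgoing transition. -/
def IsFinal (v : G.V) : Prop := ∀ u, ¬ G.E v u

/-- A play is a path `v₀ v₁ … v_{n+1}` from the initial state to a final state. -/
def IsPlay (π : List G.V) : Prop :=
  2 ≤ π.length ∧ π.head? = some G.init ∧ List.Chain' G.E π ∧
    ∀ v, π.getLast? = some v → G.IsFinal v

/-- Observation sequence of player 1 (interior states only). -/
def obs1 (π : List G.V) : List Γ := ((π.drop 1).dropLast).map G.β1

/-- Observation sequence of player 2 (interior states only). -/
def obs2 (π : List G.V) : List Γ := ((π.drop 1).dropLast).map G.β2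

/-- Admissible decisions `Ω(π)` at (the final state of) a play. -/
def OmegaP (π : List G.V) : Set Bool := {a | ∃ v, π.getLast? = some v ∧ a ∈ G.Ω v}

/-- Plays indistinguishable to player 1: `π ∼¹ π'`. -/
def Ind1 (π π' : List G.V) : Prop := G.IsPlay π ∧ G.IsPlay π' ∧ G.obs1 π = G.obs1 π'

/-- Plays indistinguishable to player 2: `π ∼² π'`. -/
def Ind2 (π π' : List G.V) : Prop := G.IsPlay π ∧ G.IsPlay π' ∧ G.obs2 π = G.obs2 π'

/-- Connected plays: `π ∼* π'` (alternating chains of `∼¹` and `∼²`). -/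
def Connected : List G.V → List G.V → Prop :=
  Relation.ReflTransGen (fun π π' => G.Ind1 π π' ∨ G.Ind2 π π')

/-- A (state-based) strategy of player 1: invariant under `∼¹`. -/
def Strategy1 (s : List G.V → Bool) : Prop := ∀ π π', G.Ind1 π π' → s π = s π'

/-- A (state-based) strategy of player 2: invariant under `∼²`. -/
def Strategy2 (s : List G.V → Bool) : Prop := ∀ π π', G.Ind2 π π' → s π = s π'

/-- A joint strategy is winning if on every play the two decisions agree and
are admissible. -/
def JointWinning (s1 s2 : List G.V → Bool) : Prop :=
  G.Strategy1 s1 ∧ G.Strategy2 s2 ∧ ∀ π, G.IsPlay π → s1 π = s2 π ∧ s1 π ∈ G.OmegaP π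

/-- A game is solvable if it admits a joint winning strategy. -/
def Solvable : Prop := ∃ s1 s2, G.JointWinning s1 s2

/-- An observation-based strategy `t : Γ* → Bool` of player 1 is winning if it is
the first component of a joint winning strategy. -/
def ObsWinning (t : List Γ → Bool) : Prop :=
  ∃ t2 : List Γ → Bool, G.JointWinning (fun π => t (G.obs1 π)) (fun π => t2 (G.obs2 π))

/-- A decision `a` is safe at a play `π` if it is admissible at every connected play. -/
def Safe (a : Bool) (π : List G.V) : Prop :=
  ∀ π', G.IsPlay π' → G.Connected π π' → a ∈ G.OmegaP π'

/-- Seed relation: pairs of observation sequences of the two players on plays. -/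
def seedRel : Set (List Γ × List Γ) :=
  {p | ∃ π, G.IsPlay π ∧ p.1 = G.obs1 π ∧ p.2 = G.obs2 π}

/-- Seed language `L_acc`: player-1 observations of plays with `Ω(π) = {1}`. -/
def LaccSet : Set (List Γ) := {w | ∃ π, G.IsPlay π ∧ G.obs1 π = w ∧ G.OmegaP π = {true}}

/-- Seed language `L_rej`: player-1 observations of plays with `Ω(π) = {0}`. -/
def LrejSet : Set (List Γ) := {w | ∃ π, G.IsPlay π ∧ G.obs1 π = w ∧ G.OmegaP π = {false}}

end CGame

/-- Words over the subalphabet `S`. -/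
def WordsIn {Γ : Type} (S : Set Γ) : Set (List Γ) := {w | ∀ a ∈ w, a ∈ S}

/-- `G` covers `L` over the terminal alphabet `S`: `G` is solvable, some winning
strategy defines exactly `L` on `S`-words, and every winning strategy accepts `L`. -/
def CGame.Covers {Γ : Type} (G : CGame Γ) (S : Set Γ) (L : Set (List Γ)) : Prop :=
  G.Solvable ∧
  (∃ t, G.ObsWinning t ∧ ∀ w ∈ WordsIn S, (w ∈ L ↔ t w = true)) ∧
  (∀ t, G.ObsWinning t → ∀ w ∈ L, t w = true)

/-- `G` characterises `L` over `S`: solvable and every winning strategy defines `L`. -/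
def CGame.Characterises {Γ : Type} (G : CGame Γ) (S : Set Γ) (L : Set (List Γ)) : Prop :=
  G.Solvable ∧ ∀ t, G.ObsWinning t → ∀ w ∈ WordsIn S, (w ∈ L ↔ t w = true)
/-! ## Operations on word relations. -/

/-- Composition of word relations. -/
def RelComp {α : Type} (S S' : Set (List α × List α)) : Set (List α × List α) :=
  {p | ∃ z, (p.1, z) ∈ S ∧ (z, p.2) ∈ S'}

/-- Inverse of a word relation. -/
def RelInv {α : Type} (S : Set (List α × List α)) : Set (List α × List α) :=
  {p | (p.2, p.1) ∈ S}

/-- Reflexive-transitive iteration `S*` of a word relation. -/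
def RelStar {α : Type} (S : Set (List α × List α)) : Set (List α × List α) :=
  {p | Relation.ReflTransGen (fun x y => (x, y) ∈ S) p.1 p.2}

/-- Image `S L = { x | (x,y) ∈ S for some y ∈ L }`. -/
def RelImage {α : Type} (S : Set (List α × List α)) (L : Set (List α)) : Set (List α) :=
  {x | ∃ y, (x, y) ∈ S ∧ y ∈ L}

/-- Reflection `τ(R) := R R⁻¹`. -/
def Reflection {α : Type} (S : Set (List α × List α)) : Set (List α × List α) :=
  RelComp S (RelInv S)


/-! A joint winning strategy makes player 1's decision invariant under a reflection step
`x τ y`: the plays witnessing it share player 2's observations, so player 2, and hence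
player 1, decides alike on them. Thus `τ* L_acc` is decided `true` and `τ* L_rej` `false`.
Conversely, let player 1 accept exactly `τ* L_acc` and player 2 accept the observations
`R`-related to it. Closure of `τ* L_acc` under `τ`-predecessors makes the two decisions
agree, and a play on which the decision were inadmissible would, as `Ω` is nonempty at
final states, lie in `L_rej` while accepted, or in `L_acc` while rejected. -/

section WordRelations

variable {α : Type} {S : Set (List α × List α)} {L P : Set (List α)}

theorem subset_relImage_relStar (S : Set (List α × List α)) (L : Set (List α)) :
    L ⊆ RelImage (RelStar S) L :=
  fun x hx => ⟨x, Relation.ReflTransGen.refl, hx⟩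

theorem mem_relImage_relStar_of_step {x y : List α} (hxy : (x, y) ∈ S)
    (hy : y ∈ RelImage (RelStar S) L) : x ∈ RelImage (RelStar S) L :=
  let ⟨z, hyz, hz⟩ := hy
  ⟨z, Relation.ReflTransGen.head hxy hyz, hz⟩

theorem relImage_relStar_subset (hL : L ⊆ P) (hP : ∀ x y, (x, y) ∈ S → y ∈ P → x ∈ P) :
    RelImage (RelStar S) L ⊆ P := by
  rintro x ⟨y, hxy, hy⟩
  change Relation.ReflTransGen _ x y at hxy
  induction hxy using Relation.ReflTransGen.head_induction_on with
  | refl => exact hL hy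
  | head hstep _ ih => exact hP _ _ hstep ih

end WordRelations

namespace CGame

variable {Γ : Type} {G : CGame Γ} {π : List G.V}

theorem IsPlay.omegaP_nonempty (hπ : G.IsPlay π) : (G.OmegaP π).Nonempty := by
  obtain ⟨hlen, -, -, hfinal⟩ := hπ
  have hne : π ≠ [] := by rintro rfl; simp at hlen
  obtain ⟨a, ha⟩ := G.Ω_ne _ (hfinal _ (List.getLast?_eq_some_getLast hne))
  exact ⟨a, _, List.getLast?_eq_some_getLast hne, ha⟩

theorem IsPlay.omegaP_eq_singleton_not {b : Bool} (hπ : G.IsPlay π) (hb : b ∉ G.OmegaP π) :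
    G.OmegaP π = {!b} :=
  Set.eq_singleton_iff_nonempty_unique_mem.2
    ⟨hπ.omegaP_nonempty, fun _ ha => Bool.eq_not_iff.2 fun hab => hb (hab ▸ ha)⟩

variable (G) in
def wordsDecided (s : List G.V → Bool) (b : Bool) : Set (List Γ) :=
  {w | ∃ π, G.IsPlay π ∧ G.obs1 π = w ∧ s π = b}

theorem Strategy1.disjoint_wordsDecided {s : List G.V → Bool} (hs : G.Strategy1 s) :
    Disjoint (G.wordsDecided s true) (G.wordsDecided s false) :=
  Set.disjoint_left.2 fun _ ⟨π, hπ, hw, ht⟩ ⟨π', hπ', hw', hf⟩ =>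
    Bool.noConfusion (ht.symm.trans <| (hs π π' ⟨hπ, hπ', hw.trans hw'.symm⟩).trans hf)

section JointWinning

variable {s1 s2 : List G.V → Bool}

theorem JointWinning.mem_wordsDecided_of_omegaP_eq (h : G.JointWinning s1 s2) {b : Bool}
    (hπ : G.IsPlay π) (hΩ : G.OmegaP π = {b}) : G.obs1 π ∈ G.wordsDecided s1 b :=
  ⟨π, hπ, rfl, by simpa [hΩ] using (h.2.2 π hπ).2⟩

theorem JointWinning.mem_wordsDecided_of_reflection (h : G.JointWinning s1 s2) {b : Bool}
    {x y : List Γ} (hxy : (x, y) ∈ Reflection G.seedRel) (hy : y ∈ G.wordsDecided s1 b) :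
    x ∈ G.wordsDecided s1 b := by
  obtain ⟨hs1, hs2, hwin⟩ := h
  obtain ⟨z, ⟨α, hα, hαx, hαz⟩, ⟨β, hβ, hβy, hβz⟩⟩ := hxy
  obtain ⟨π, hπ, hπy, hπb⟩ := hy
  refine ⟨α, hα, hαx.symm, ?_⟩
  calc s1 α = s2 α := (hwin α hα).1
    _ = s2 β := hs2 α β ⟨hα, hβ, hαz.symm.trans hβz⟩
    _ = s1 β := (hwin β hβ).1.symm
    _ = s1 π := hs1 β π ⟨hβ, hπ, hβy.symm.trans hπy.symm⟩
    _ = b := hπb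

end JointWinning

open scoped Classical in
theorem jointWinning_of_separating {A : Set (List Γ)}
    (hA : ∀ x y, (x, y) ∈ Reflection G.seedRel → y ∈ A → x ∈ A)
    (hacc : G.LaccSet ⊆ A) (hrej : Disjoint A G.LrejSet) :
    G.JointWinning (fun π => decide (G.obs1 π ∈ A))
      (fun π => decide (∃ w ∈ A, (w, G.obs2 π) ∈ G.seedRel)) := by
  refine ⟨fun π π' h => by simp only [h.2.2], fun π π' h => by simp only [h.2.2],
    fun π hπ => ⟨?_, ?_⟩⟩
  · have hR : (G.obs1 π, G.obs2 π) ∈ G.seedRel := ⟨π, hπ, rfl, rfl⟩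
    exact decide_eq_decide.2 ⟨fun h => ⟨_, h, hR⟩, fun ⟨w, hw, hwR⟩ => hA _ _ ⟨_, hR, hwR⟩ hw⟩
  · by_cases h : G.obs1 π ∈ A
    · simp only [h, decide_true]
      by_contra hΩ
      exact Set.disjoint_left.1 hrej h ⟨π, hπ, rfl, hπ.omegaP_eq_singleton_not hΩ⟩
    · simp only [h, decide_false]
      by_contra hΩ
      exact h (hacc ⟨π, hπ, rfl, hπ.omegaP_eq_singleton_not hΩ⟩)

end CGame

/-- A consensus game with seed `(R, L_acc, L_rej)` and
reflection `τ = R R⁻¹` is solvable iff `τ* L_acc ∩ τ* L_rej = ∅`. -/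
theorem solvable_iff_disjoint_images {Γ : Type} (G : CGame Γ) :
    G.Solvable ↔
      RelImage (RelStar (Reflection G.seedRel)) G.LaccSet ∩
        RelImage (RelStar (Reflection G.seedRel)) G.LrejSet = ∅ := by
  rw [← Set.disjoint_iff_inter_eq_empty]
  constructor
  · rintro ⟨s1, s2, h⟩
    refine h.1.disjoint_wordsDecided.mono ?_ ?_ <;>
      exact relImage_relStar_subset
        (fun _ ⟨π, hπ, hw, hΩ⟩ => hw ▸ h.mem_wordsDecided_of_omegaP_eq hπ hΩ)
        (fun _ _ => h.mem_wordsDecided_of_reflection)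
  · exact fun hdisj => ⟨_, _, CGame.jointWinning_of_separating
      (fun _ _ => mem_relImage_relStar_of_step) (subset_relImage_relStar _ _)
      (hdisj.mono_right (subset_relImage_relStar _ _))⟩
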